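/- arXiv:1705.03911 — 3 statements merged into one kernel-verified Lean document; each statement's English description precedes it below -/
import Mathlib

section
/- The plane through the origin containing the Laguerre bisector $B_L(\tilde{c}_i, \tilde{c}_j)$, namely the plane with normal vector $\mathbf{n} = \sec(r_i)\mathbf{x}_i - \sec(r_j)\mathbf{x}_j$, is orthogonal at each intersection point to the great circle through the two centers $p_i$ and $p_j$; i.e., if $\mathbf{x} \in U$ satisfies $\mathbf{n}^T\mathbf{x} = 0$ and $\mathbf{x}$ lies in the plane spanned by $\mathbf{x}_i$ and $\mathbf{x}_j$, then the tangent vector of the great circle through $p_i, p_j$ at $\mathbf{x}$ is orthogonal to the tangent vector of the bisector great circle at $\mathbf{x}$. -/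
/-!
The centres `xᵢ, xⱼ` span a plane containing both the common point `x` and the bisector normal
`n = sec rᵢ • xᵢ - sec rⱼ • xⱼ`, and `n ⊥ x`. A tangent vector `u` of the centre circle at `x` lies
in that plane and is orthogonal to `x`, so it is a multiple of `n`, hence orthogonal to every
tangent vector `w ⊥ n` of the bisector. Here `n ≠ 0` because `sec rᵢ ≠ 0` and the centres are
linearly independent.
-/

open scoped RealInnerProductSpace InnerProductSpace

open Module Submodule

section LinearAlgebra

variable {K V : Type*} [Field K] [AddCommGroup V] [Module K V]

theorem LinearIndependent.finrank_span_pair {a b : V} (hab : LinearIndependent K ![a, b]) :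
    finrank K (span K {a, b}) = 2 := by
  have := finrank_span_eq_card hab
  rwa [Matrix.range_cons_cons_empty] at this

theorem LinearIndependent.smul_sub_smul_ne_zero {a b : V} (hab : LinearIndependent K ![a, b])
    {s t : K} (hs : s ≠ 0) : s • a - t • b ≠ 0 := fun h =>
  hs (LinearIndependent.pair_iff.mp hab s (-t) (by rwa [neg_smul, ← sub_eq_add_neg])).1

theorem Submodule.span_pair_eq_of_finrank_eq_two {W : Submodule K V} (hW : finrank K W = 2)
    {a b : V} (ha : a ∈ W) (hb : b ∈ W) (hab : LinearIndependent K ![a, b]) :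
    span K {a, b} = W :=
  have : FiniteDimensional K W := Module.finite_of_finrank_eq_succ hW
  eq_of_le_of_finrank_eq (span_le.mpr (Set.insert_subset ha (Set.singleton_subset_iff.mpr hb)))
    (hab.finrank_span_pair.trans hW.symm)

end LinearAlgebra

section InnerProduct

variable {𝕜 E : Type*} [RCLike 𝕜] [NormedAddCommGroup E] [InnerProductSpace 𝕜 E]

theorem mem_span_singleton_of_inner_eq_zero_of_finrank_eq_two {W : Submodule 𝕜 E}
    (hW : finrank 𝕜 W = 2) {x n u : E} (hx : x ∈ W) (hn : n ∈ W) (hx0 : x ≠ 0) (hn0 : n ≠ 0)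
    (hnx : ⟪n, x⟫_𝕜 = 0) (hu : u ∈ W) (hux : ⟪u, x⟫_𝕜 = 0) : u ∈ 𝕜 ∙ n := by
  have hxn : LinearIndependent 𝕜 ![x, n] :=
    linearIndependent_of_ne_zero_of_inner_eq_zero (by simp [Fin.forall_fin_two, hx0, hn0])
      (by simp [Pairwise, Fin.forall_fin_two, hnx, inner_eq_zero_symm.mp hnx])
  rw [← span_pair_eq_of_finrank_eq_two hW hx hn hxn] at hu
  obtain ⟨a, b, rfl⟩ := mem_span_pair.mp hu
  have ha : a = 0 := by
    simpa [inner_add_left, inner_smul_left, hnx, hx0] using hux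
  simp [ha, mem_span_singleton]

end InnerProduct

theorem laguerre_bisector_orthogonal_to_center_circle_general
    (xi xj x : EuclideanSpace ℝ (Fin 3)) (ri rj : ℝ)
    (hind : LinearIndependent ℝ ![xi, xj])
    (hri : ri ∈ Set.Ico 0 (Real.pi / 2))
    (hx : ‖x‖ = 1)
    (hxspan : x ∈ Submodule.span ℝ {xi, xj})
    (hxbis : ⟪(Real.cos ri)⁻¹ • xi - (Real.cos rj)⁻¹ • xj, x⟫ = 0) :
    ∀ u w : EuclideanSpace ℝ (Fin 3),
      u ∈ Submodule.span ℝ {xi, xj} → ⟪u, x⟫ = 0 →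
      ⟪(Real.cos ri)⁻¹ • xi - (Real.cos rj)⁻¹ • xj, w⟫ = 0 → ⟪w, x⟫ = 0 →
      ⟪u, w⟫ = 0 := by
  intro u w hu hux hnw _
  have hcos : Real.cos ri ≠ 0 :=
    (Real.cos_pos_of_mem_Ioo ⟨by linarith [hri.1, Real.pi_pos], hri.2⟩).ne'
  have hn : (Real.cos ri)⁻¹ • xi - (Real.cos rj)⁻¹ • xj ∈ span ℝ {xi, xj} :=
    sub_mem (smul_mem _ _ (subset_span (by simp))) (smul_mem _ _ (subset_span (by simp)))
  obtain ⟨a, rfl⟩ := mem_span_singleton.mp <|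
    mem_span_singleton_of_inner_eq_zero_of_finrank_eq_two hind.finrank_span_pair hxspan hn
      (norm_ne_zero_iff.mp (hx ▸ one_ne_zero)) (hind.smul_sub_smul_ne_zero (inv_ne_zero hcos))
      hxbis hu hux
  rw [real_inner_smul_left, hnw, mul_zero]

/-- The Laguerre bisector great circle crosses the great circle through the two
centers at right angles: at a common point `x`, any tangent vector `u` of the
great circle through the centers (i.e. `u ∈ span {xᵢ, xⱼ}`, `u ⊥ x`) is
orthogonal to any tangent vector `w` of the bisector great circle
(i.e. `w ⊥ n`, `w ⊥ x`, where `n = sec rᵢ • xᵢ - sec rⱼ • xⱼ`). -/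
theorem laguerre_bisector_orthogonal_to_center_circle
    (xi xj x : EuclideanSpace ℝ (Fin 3)) (ri rj : ℝ)
    (hxi : ‖xi‖ = 1) (hxj : ‖xj‖ = 1)
    (hind : LinearIndependent ℝ ![xi, xj])
    (hri : ri ∈ Set.Ico 0 (Real.pi / 2)) (hrj : rj ∈ Set.Ico 0 (Real.pi / 2))
    (hx : ‖x‖ = 1)
    (hxspan : x ∈ Submodule.span ℝ {xi, xj})
    (hxbis : ⟪(Real.cos ri)⁻¹ • xi - (Real.cos rj)⁻¹ • xj, x⟫ = 0) :
    ∀ u w : EuclideanSpace ℝ (Fin 3),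
      u ∈ Submodule.span ℝ {xi, xj} → ⟪u, x⟫ = 0 →
      ⟪(Real.cos ri)⁻¹ • xi - (Real.cos rj)⁻¹ • xj, w⟫ = 0 → ⟪w, x⟫ = 0 →
      ⟪u, w⟫ = 0 :=
  laguerre_bisector_orthogonal_to_center_circle_general xi xj x ri rj hind hri hx hxspan hxbis
end

section
/- Let $\tilde{c}_i, \tilde{c}_j, \tilde{c}_k$ be three spherical circles on $U$ with planes $\pi(\tilde{c}_i), \pi(\tilde{c}_j), \pi(\tilde{c}_k)$ intersecting pairwise in lines $\ell_{i,j}, \ell_{j,k}, \ell_{i,k}$. If the three Laguerre bisector great circles $B_L(\tilde{c}_i,\tilde{c}_j)$, $B_L(\tilde{c}_j,\tilde{c}_k)$, $B_L(\tilde{c}_i,\tilde{c}_k)$ have a common point $v \in U$, then the three planes $\pi(\tilde{c}_i), \pi(\tilde{c}_j), \pi(\tilde{c}_k)$ have a common point $V$ lying on the ray (or line) through the origin and $v$, provided the three centers $\mathbf{x}_i, \mathbf{x}_j, \mathbf{x}_k$ are linearly independent. -/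
/-!
Concurrency of the three Laguerre bisectors at `v` says that `⟪x m, v⟫ / cos r_m` is a common
value `c`. Since the centers span `ℝ³` and `v ≠ 0`, some `⟪x m, v⟫` is nonzero, so `c ≠ 0`, and
`V = c⁻¹ • v` satisfies `⟪x m, V⟫ = cos r_m`, i.e. lies on all three planes.
-/

open scoped RealInnerProductSpace

section

variable {E : Type*} [NormedAddCommGroup E] [InnerProductSpace ℝ E] [FiniteDimensional ℝ E]
  {ι : Type*} [Fintype ι] {x : ι → E}

theorem eq_zero_of_forall_inner_eq_zero_of_linearIndependent (hind : LinearIndependent ℝ x)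
    (hcard : Fintype.card ι = Module.finrank ℝ E) {v : E} (h : ∀ i, ⟪x i, v⟫ = 0) : v = 0 :=
  InnerProductSpace.ext_inner_left_basis (basisOfLinearIndependentOfCardEqFinrank' x hind hcard)
    fun i => by simp [h]

theorem exists_smul_inner_eq_of_forall_inner_div_eq (hind : LinearIndependent ℝ x)
    (hcard : Fintype.card ι = Module.finrank ℝ E) {w : ι → ℝ} (hw : ∀ i, w i ≠ 0)
    {v : E} (hv : v ≠ 0) (h : ∀ i j, ⟪x i, v⟫ / w i = ⟪x j, v⟫ / w j) :
    ∃ t : ℝ, t ≠ 0 ∧ ∀ i, ⟪x i, t • v⟫ = w i := by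
  obtain ⟨i₀, hi₀⟩ : ∃ i₀, ⟪x i₀, v⟫ ≠ 0 := by
    by_contra! h0
    exact hv (eq_zero_of_forall_inner_eq_zero_of_linearIndependent hind hcard h0)
  refine ⟨w i₀ / ⟪x i₀, v⟫, div_ne_zero (hw i₀) hi₀, fun i => ?_⟩
  have hi := h i i₀
  rw [div_eq_div_iff (hw i) (hw i₀)] at hi
  rw [inner_smul_right, div_mul_eq_mul_div, div_eq_iff hi₀]
  linarith

end

theorem bisectors_concurrent_implies_planes_concurrent_general
    (x : Fin 3 → EuclideanSpace ℝ (Fin 3)) (r : Fin 3 → ℝ)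
    (hr : ∀ m, r m ∈ Set.Ico 0 (Real.pi / 2))
    (hind : LinearIndependent ℝ x)
    (v : EuclideanSpace ℝ (Fin 3)) (hv : ‖v‖ = 1)
    (hbis : ∀ m m' : Fin 3,
      ⟪x m, v⟫ / Real.cos (r m) = ⟪x m', v⟫ / Real.cos (r m')) :
    ∃ t : ℝ, t ≠ 0 ∧ ∀ m : Fin 3, ⟪x m, t • v⟫ = Real.cos (r m) := by
  have hcos : ∀ m, Real.cos (r m) ≠ 0 := fun m =>
    (Real.cos_pos_of_mem_Ioo ⟨by linarith [Real.pi_pos, (hr m).1], (hr m).2⟩).ne'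
  have hv₀ : v ≠ 0 := norm_ne_zero_iff.mp (hv ▸ one_ne_zero)
  exact exists_smul_inner_eq_of_forall_inner_div_eq hind (by simp) hcos hv₀ hbis

/-- If the three Laguerre bisector great circles of three spherical circles
with linearly independent centers have a common point `v` on the unit sphere,
then the three planes `π(c̃ᵢ), π(c̃ⱼ), π(c̃ₖ)` have a common point `V = t • v`
lying on the line through the origin and `v`. -/
theorem bisectors_concurrent_implies_planes_concurrent
    (x : Fin 3 → EuclideanSpace ℝ (Fin 3)) (r : Fin 3 → ℝ)
    (hx : ∀ m, ‖x m‖ = 1) (hr : ∀ m, r m ∈ Set.Ico 0 (Real.pi / 2))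
    (hind : LinearIndependent ℝ x)
    (v : EuclideanSpace ℝ (Fin 3)) (hv : ‖v‖ = 1)
    (hbis : ∀ m m' : Fin 3,
      ⟪x m, v⟫ / Real.cos (r m) = ⟪x m', v⟫ / Real.cos (r m')) :
    ∃ t : ℝ, t ≠ 0 ∧ ∀ m : Fin 3, ⟪x m, t • v⟫ = Real.cos (r m) :=
  bisectors_concurrent_implies_planes_concurrent_general x r hr hind v hv hbis
end

section
/- Let $\mathcal{P}$ and $\mathcal{P}'$ be two tetrahedra in $\mathbb{R}^3$, each containing the origin $O$ in its interior, such that corresponding vertices lie on the same rays from the origin: vertex $v_m'$ of $\mathcal{P}'$ equals $\lambda_m v_m$ for some $\lambda_m > 0$, $m = 1,2,3,4$, where $v_1,\dots,v_4$ are the vertices of $\mathcal{P}$ (affinely independent). Then there is a projective transformation of the form $f(\mathbf{x}) = \frac{\eta}{\alpha + \mathbf{w}^T\mathbf{x}}\mathbf{x}$ (with $\alpha, \eta \neq 0$, $\mathbf{w} \in \mathbb{R}^3$) mapping $v_m$ to $v_m'$ for all $m$. -/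
open scoped RealInnerProductSpace

/-!
The vertices `vₘ` form an affine basis of `ℝ³`, with barycentric coordinates `cₘ`. The affine
function `g = ∑ₖ λₖ⁻¹ cₖ` takes the value `λₘ⁻¹` at `vₘ`; writing `g x = g 0 + ⟪w, x⟫`, the map
with `α = g 0`, `η = 1` sends `vₘ` to `λₘ vₘ`. Since `O` is interior, all barycentric coordinates
of `O` are positive, hence so is `α = g 0`.
-/

theorem AffineMap.sum_apply {ι k P V W : Type*} [Ring k] [AddCommGroup V] [Module k V]
    [AddTorsor V P] [AddCommGroup W] [Module k W] (s : Finset ι) (f : ι → P →ᵃ[k] W) (x : P) :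
    (∑ i ∈ s, f i) x = ∑ i ∈ s, f i x :=
  map_sum (⟨⟨fun g : P →ᵃ[k] W => g x, rfl⟩, fun _ _ => rfl⟩ : (P →ᵃ[k] W) →+ W) f s

theorem AffineBasis.sum_smul_coord_apply {ι k P V : Type*} [CommRing k] [AddCommGroup V]
    [Module k V] [AddTorsor V P] [Fintype ι] (b : AffineBasis ι k P) (c : ι → k) (j : ι) :
    (∑ i, c i • b.coord i) (b j) = c j := by
  classical
  simp [AffineMap.sum_apply, b.coord_apply]

theorem AffineMap.exists_apply_eq_apply_zero_add_inner {E : Type*} [NormedAddCommGroup E]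
    [InnerProductSpace ℝ E] [FiniteDimensional ℝ E] (f : E →ᵃ[ℝ] ℝ) :
    ∃ w : E, ∀ x, f x = f 0 + ⟪w, x⟫ := by
  refine ⟨(InnerProductSpace.toDual ℝ E).symm f.linear.toContinuousLinearMap, fun x => ?_⟩
  rw [InnerProductSpace.toDual_symm_apply, LinearMap.coe_toContinuousLinearMap', f.decomp]
  simp [add_comm]

theorem projective_map_between_radial_tetrahedra_general
    (v : Fin 4 → EuclideanSpace ℝ (Fin 3))
    (hindep : AffineIndependent ℝ v)
    (lam : Fin 4 → ℝ) (hlam : ∀ m, 0 < lam m)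
    (hO : (0 : EuclideanSpace ℝ (Fin 3)) ∈
      interior (convexHull ℝ (Set.range v))) :
    ∃ (α η : ℝ) (w : EuclideanSpace ℝ (Fin 3)), α ≠ 0 ∧ η ≠ 0 ∧
      ∀ m : Fin 4, α + ⟪w, v m⟫ ≠ 0 ∧
        (η / (α + ⟪w, v m⟫)) • v m = lam m • v m := by
  have hspan : affineSpan ℝ (Set.range v) = ⊤ :=
    hindep.affineSpan_eq_top_iff_card_eq_finrank_add_one.mpr (by simp)
  let b : AffineBasis (Fin 4) ℝ (EuclideanSpace ℝ (Fin 3)) := ⟨v, hindep, hspan⟩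
  have hcoord : ∀ k, 0 < b.coord k 0 := b.interior_convexHull.subset hO
  set g := ∑ k, (lam k)⁻¹ • b.coord k
  have hg0 : 0 < g 0 := by
    rw [AffineMap.sum_apply]
    exact Finset.sum_pos (fun k _ => mul_pos (inv_pos.mpr (hlam k)) (hcoord k))
      Finset.univ_nonempty
  obtain ⟨w, hw⟩ := g.exists_apply_eq_apply_zero_add_inner
  refine ⟨g 0, 1, w, hg0.ne', one_ne_zero, fun m => ?_⟩
  rw [← hw, show g (v m) = (lam m)⁻¹ from b.sum_smul_coord_apply _ m, one_div, inv_inv]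
  exact ⟨inv_ne_zero (hlam m).ne', rfl⟩

/-- If two tetrahedra containing the origin in their interiors have
corresponding vertices on the same rays from the origin (`v'ₘ = λₘ • vₘ`,
`λₘ > 0`), then some projection-preserving projective transformation
`f(x) = (η / (α + ⟪w, x⟫)) • x` maps `vₘ` to `v'ₘ` for all `m`. -/
theorem projective_map_between_radial_tetrahedra
    (v : Fin 4 → EuclideanSpace ℝ (Fin 3))
    (hindep : AffineIndependent ℝ v)
    (lam : Fin 4 → ℝ) (hlam : ∀ m, 0 < lam m)
    (hO : (0 : EuclideanSpace ℝ (Fin 3)) ∈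
      interior (convexHull ℝ (Set.range v)))
    (hO' : (0 : EuclideanSpace ℝ (Fin 3)) ∈
      interior (convexHull ℝ (Set.range (fun m => lam m • v m)))) :
    ∃ (α η : ℝ) (w : EuclideanSpace ℝ (Fin 3)), α ≠ 0 ∧ η ≠ 0 ∧
      ∀ m : Fin 4, α + ⟪w, v m⟫ ≠ 0 ∧
        (η / (α + ⟪w, v m⟫)) • v m = lam m • v m :=
  projective_map_between_radial_tetrahedra_general v hindep lam hlam hO
end
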